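/- Let n ≥ 2, let d ∈ [0, n−1], and let μ be a Borel probability measure on S^{n−1} with [μ]_d ≤ 1. Let Ω' ⊆ S^{n−1} be μ-measurable with μ(Ω') ≥ κ > 0, let ρ > 0 and r > 0 with 8r ≤ ρ, and suppose that for each e ∈ Ω' there are points a_e, b_e ∈ ℝⁿ with |a_e − b_e| ≥ ρ, ⟨a_e − b_e, e⟩ ≥ |a_e − b_e|/2, and such that a_e and b_e both lie within distance r of some line in ℝⁿ with direction e. Then there is a constant c(n,d) > 0 such that the number of distinct difference vectors #{ a_e − b_e : e ∈ Ω' } is at least c(n,d) · κ · (ρ/r)^d. -/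
import Mathlib


open MeasureTheory Metric Set
open scoped ENNReal NNReal RealInnerProductSpace

noncomputable section

/-- Euclidean space `ℝⁿ`. -/
abbrev Eucl (n : ℕ) : Type := EuclideanSpace ℝ (Fin n)

/-- The unit sphere `S^{n-1}` in `ℝⁿ`. -/
def unitSphere (n : ℕ) : Set (Eucl n) := Metric.sphere (0 : Eucl n) 1

/-- The tube `T_{e,δ}(a)`: points `x` with `|⟪x-a,e⟫| ≤ 1/2` and
`|x - a - ⟪x-a,e⟫e| ≤ δ`. -/
def tube {n : ℕ} (e a : Eucl n) (δ : ℝ) : Set (Eucl n) :=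
  {x | |⟪x - a, e⟫| ≤ 1 / 2 ∧ ‖x - a - ⟪x - a, e⟫ • e‖ ≤ δ}

/-- The Kakeya maximal function at scale `δ`:
`K_δ f (e) = sup_a |T_{e,δ}(a)|⁻¹ ∫_{T_{e,δ}(a)} |f|`. -/
def kakeyaMaxFn {n : ℕ} (δ : ℝ) (f : Eucl n → ℝ) (e : Eucl n) : ℝ≥0∞ :=
  ⨆ a : Eucl n,
    (∫⁻ x in tube e a δ, ENNReal.ofReal |f x| ∂volume) / volume (tube e a δ)

/-- The `(μ,p)`-norm of the Kakeya maximal operator at scale `δ`: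
the supremum of `(∫ (K_δ f)^p dμ)^{1/p}` over `‖f‖_{L^p} ≤ 1`. -/
def kakeyaNorm {n : ℕ} (μ : Measure (Eucl n)) (p δ : ℝ) : ℝ≥0∞ :=
  ⨆ f ∈ {f : Eucl n → ℝ | eLpNorm f (ENNReal.ofReal p) volume ≤ 1},
    (∫⁻ e, kakeyaMaxFn δ f e ^ p ∂μ) ^ (1 / p)

/-- Surface measure `σ` on the unit sphere: the `(n-1)`-dimensional Hausdorff
measure restricted to the sphere. -/
def sphereMeasure (n : ℕ) : Measure (Eucl n) :=
  (μH[(n : ℝ) - 1]).restrict (unitSphere n)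

/-- `[μ]_d ≤ 1`, i.e. `μ(B(e,r)) ≤ r^d` for all `e ∈ S^{n-1}` and `r > 0`. -/
def frostman {n : ℕ} (μ : Measure (Eucl n)) (d : ℝ) : Prop :=
  ∀ e ∈ unitSphere n, ∀ r : ℝ, 0 < r → μ (Metric.ball e r) ≤ ENNReal.ofReal (r ^ d)

/-- `X` is an `Ω`-Kakeya set: for every direction `e ∈ Ω`, `X` contains a unit
segment with direction `e`. -/
def IsOmegaKakeya {n : ℕ} (Ω X : Set (Eucl n)) : Prop :=
  ∀ e ∈ Ω, ∃ a : Eucl n, (fun t : ℝ => a + t • e) '' Set.Icc (0 : ℝ) 1 ⊆ X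

/-- The (topological) support of a measure on `ℝⁿ`. -/
def measSupport {n : ℕ} (μ : Measure (Eucl n)) : Set (Eucl n) :=
  {x | ∀ r : ℝ, 0 < r → 0 < μ (Metric.ball x r)}


/-- Key geometric lemma: if `‖e‖ = 1`, `ρ ≤ ‖v‖`, `⟪v,e⟫ ≥ ‖v‖/2` and `v` is within
`2r` of a multiple of `e`, with `8r ≤ ρ`, then `e` is within `17r/ρ` of `v/‖v‖`. -/
lemma geom_key {n : ℕ} (r ρ : ℝ) (hr : 0 < r) (hρ : 0 < ρ) (h8 : 8 * r ≤ ρ)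
    (e v : Eucl n) (he : ‖e‖ = 1) (hv : ρ ≤ ‖v‖) (hin : ‖v‖ / 2 ≤ ⟪v, e⟫)
    (s : ℝ) (hs : ‖v - s • e‖ ≤ 2 * r) :
    dist e (‖v‖⁻¹ • v) < 17 * r / ρ := by
  have hv0 : 0 < ‖v‖ := lt_of_lt_of_le hρ hv
  have h1 : |⟪v - s • e, e⟫| ≤ 2 * r := by
    calc |⟪v - s • e, e⟫| ≤ ‖v - s • e‖ * ‖e‖ := abs_real_inner_le_norm _ _
      _ ≤ 2 * r := by rw [he, mul_one]; exact hs
  have h2 : ⟪v - s • e, e⟫ = ⟪v, e⟫ - s := by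
    rw [inner_sub_left, real_inner_smul_left, real_inner_self_eq_norm_sq, he]
    ring
  rw [h2, abs_le] at h1
  have hsl : ρ / 4 ≤ s := by
    have : ⟪v, e⟫ - 2 * r ≤ s := by linarith [h1.1]
    nlinarith
  have hs_pos : 0 < s := lt_of_lt_of_le (by linarith) hsl
  have hsv : |‖v‖ - s| ≤ 2 * r := by
    have h3 : |‖v‖ - ‖s • e‖| ≤ ‖v - s • e‖ := abs_norm_sub_norm_le _ _
    have h4 : ‖s • e‖ = s := by
      rw [norm_smul, he, mul_one, Real.norm_eq_abs, abs_of_pos hs_pos]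
    rw [h4] at h3; linarith
  have heq : e - ‖v‖⁻¹ • v = s⁻¹ • (s • e - v) + (s⁻¹ - ‖v‖⁻¹) • v := by
    rw [smul_sub, sub_smul, smul_smul, inv_mul_cancel₀ (ne_of_gt hs_pos), one_smul]
    abel
  have hbound : ‖e - ‖v‖⁻¹ • v‖ ≤ 4 * r / s := by
    rw [heq]
    have hb1 : ‖s⁻¹ • (s • e - v)‖ ≤ 2 * r / s := by
      rw [norm_smul, Real.norm_eq_abs, abs_of_pos (inv_pos.2 hs_pos), norm_sub_rev]
      rw [div_eq_inv_mul, mul_comm s⁻¹ (2 * r), mul_comm s⁻¹ _]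
      exact mul_le_mul_of_nonneg_right hs (le_of_lt (inv_pos.2 hs_pos))
    have hb2 : ‖(s⁻¹ - ‖v‖⁻¹) • v‖ ≤ 2 * r / s := by
      rw [norm_smul, Real.norm_eq_abs]
      have : s⁻¹ - ‖v‖⁻¹ = (‖v‖ - s) / (s * ‖v‖) := by
        field_simp
      rw [this, abs_div, abs_of_pos (mul_pos hs_pos hv0)]
      rw [div_mul_eq_mul_div]
      rw [div_le_div_iff₀ (mul_pos hs_pos hv0) hs_pos]
      calc |‖v‖ - s| * ‖v‖ * s ≤ (2 * r) * ‖v‖ * s := by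
            have := mul_le_mul_of_nonneg_right hsv (le_of_lt hv0)
            exact mul_le_mul_of_nonneg_right this (le_of_lt hs_pos)
        _ = 2 * r * (s * ‖v‖) := by ring
    calc ‖s⁻¹ • (s • e - v) + (s⁻¹ - ‖v‖⁻¹) • v‖
        ≤ ‖s⁻¹ • (s • e - v)‖ + ‖(s⁻¹ - ‖v‖⁻¹) • v‖ := norm_add_le _ _
      _ ≤ 2 * r / s + 2 * r / s := add_le_add hb1 hb2
      _ = 4 * r / s := by ring
  rw [dist_eq_norm]
  have h16 : 4 * r / s ≤ 16 * r / ρ := by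
    rw [div_le_div_iff₀ hs_pos hρ]
    nlinarith
  have h17 : 16 * r / ρ < 17 * r / ρ := by
    apply div_lt_div_of_pos_right ?_ hρ <;> linarith
  linarith

/-- For `n ≥ 2` and `d ∈ [0,n-1]` there is `c(n,d) > 0` such that: if `μ` is a Borel
probability measure on `S^{n-1}` with `[μ]_d ≤ 1`, `Ω' ⊆ S^{n-1}` is measurable with
`μ(Ω') ≥ κ > 0`, `0 < r`, `8r ≤ ρ`, and for each `e ∈ Ω'` there are points `a_e, b_e`
with `|a_e - b_e| ≥ ρ`, `⟪a_e - b_e, e⟫ ≥ |a_e - b_e|/2`, both lying within distance `r`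
of a common line with direction `e`, then `#{a_e - b_e : e ∈ Ω'} ≥ c·κ·(ρ/r)^d`. -/
theorem stmt12 (n : ℕ) (hn : 2 ≤ n) (d : ℝ) (hd : d ∈ Set.Icc (0 : ℝ) ((n : ℝ) - 1)) :
    ∃ c : ℝ, 0 < c ∧
      ∀ μ : Measure (Eucl n), IsProbabilityMeasure μ → μ (unitSphere n)ᶜ = 0 →
        frostman μ d →
          ∀ Ω' : Set (Eucl n), Ω' ⊆ unitSphere n → MeasurableSet Ω' →
            ∀ κ : ℝ, 0 < κ → ENNReal.ofReal κ ≤ μ Ω' →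
              ∀ ρ r : ℝ, 0 < r → 0 < ρ → 8 * r ≤ ρ →
                ∀ a b : Eucl n → Eucl n,
                  (∀ e ∈ Ω',
                    ρ ≤ ‖a e - b e‖ ∧
                    ‖a e - b e‖ / 2 ≤ ⟪a e - b e, e⟫ ∧
                    ∃ c₀ : Eucl n,
                      (∃ t : ℝ, dist (a e) (c₀ + t • e) ≤ r) ∧
                      (∃ t : ℝ, dist (b e) (c₀ + t • e) ≤ r)) →
                  ENNReal.ofReal (c * κ * (ρ / r) ^ d) ≤
                    ({v : Eucl n | ∃ e ∈ Ω', v = a e - b e}.encard : ℝ≥0∞) := by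
  refine ⟨(17 : ℝ) ^ (-d), Real.rpow_pos_of_pos (by norm_num) _, ?_⟩
  intro μ hprob hcompl hfrost Ω' hΩsub hΩmeas κ hκ hκμ ρ r hr hρ h8 a b hab
  set E : Set (Eucl n) := {v : Eucl n | ∃ e ∈ Ω', v = a e - b e} with hEdef
  by_cases hE : E.Finite
  swap
  · rw [Set.Infinite.encard_eq (by exact hE)]; exact le_top
  set R : ℝ := 17 * r / ρ with hRdef
  have hR : 0 < R := by positivity
  -- every v in E has norm ≥ ρ
  have hEnorm : ∀ v ∈ E, ρ ≤ ‖v‖ := by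
    rintro v ⟨e, heΩ, rfl⟩
    exact (hab e heΩ).1
  -- covering lemma
  have cover : Ω' ⊆ ⋃ v ∈ hE.toFinset, Metric.ball (‖v‖⁻¹ • v) R := by
    intro e heΩ
    obtain ⟨h1, h2, c₀, ⟨t₁, ht₁⟩, ⟨t₂, ht₂⟩⟩ := hab e heΩ
    have he1 : ‖e‖ = 1 := by
      have := hΩsub heΩ
      simpa [unitSphere, mem_sphere_zero_iff_norm] using this
    have hvE : a e - b e ∈ E := ⟨e, heΩ, rfl⟩
    have hclose : ‖(a e - b e) - (t₁ - t₂) • e‖ ≤ 2 * r := by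
      have key : (a e - b e) - (t₁ - t₂) • e
          = (a e - (c₀ + t₁ • e)) - (b e - (c₀ + t₂ • e)) := by
        rw [sub_smul]; abel
      rw [key]
      calc ‖(a e - (c₀ + t₁ • e)) - (b e - (c₀ + t₂ • e))‖
          ≤ ‖a e - (c₀ + t₁ • e)‖ + ‖b e - (c₀ + t₂ • e)‖ := norm_sub_le _ _
        _ ≤ r + r := by
            rw [← dist_eq_norm, ← dist_eq_norm]; exact add_le_add ht₁ ht₂
        _ = 2 * r := by ring
    have := geom_key r ρ hr hρ h8 e (a e - b e) he1 h1 h2 (t₁ - t₂) hclose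
    apply Set.mem_biUnion (hE.mem_toFinset.2 hvE)
    exact this
  -- measure bound
  have hfrostR : ∀ v ∈ hE.toFinset, μ (Metric.ball (‖v‖⁻¹ • v) R)
      ≤ ENNReal.ofReal (R ^ d) := by
    intro v hv
    have hvE : v ∈ E := hE.mem_toFinset.1 hv
    have hv0 : 0 < ‖v‖ := lt_of_lt_of_le hρ (hEnorm v hvE)
    have hmem : ‖v‖⁻¹ • v ∈ unitSphere n := by
      rw [unitSphere, mem_sphere_zero_iff_norm, norm_smul, Real.norm_eq_abs,
        abs_of_pos (inv_pos.2 hv0), inv_mul_cancel₀ (ne_of_gt hv0)]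
    exact hfrost _ hmem R hR
  have hsum : μ Ω' ≤ (hE.toFinset.card : ℝ≥0∞) * ENNReal.ofReal (R ^ d) := by
    calc μ Ω' ≤ μ (⋃ v ∈ hE.toFinset, Metric.ball (‖v‖⁻¹ • v) R) := measure_mono cover
      _ ≤ ∑ v ∈ hE.toFinset, μ (Metric.ball (‖v‖⁻¹ • v) R) := measure_biUnion_finset_le _ _
      _ ≤ ∑ _v ∈ hE.toFinset, ENNReal.ofReal (R ^ d) := Finset.sum_le_sum hfrostR
      _ = (hE.toFinset.card : ℝ≥0∞) * ENNReal.ofReal (R ^ d) := by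
          rw [Finset.sum_const, nsmul_eq_mul]
  have hκsum : ENNReal.ofReal κ ≤ (hE.toFinset.card : ℝ≥0∞) * ENNReal.ofReal (R ^ d) :=
    le_trans hκμ hsum
  -- arithmetic conclusion
  have hRd0 : (0 : ℝ) < R ^ d := Real.rpow_pos_of_pos hR d
  have hreal : (17 : ℝ) ^ (-d) * κ * (ρ / r) ^ d * R ^ d = κ := by
    have h17 : (ρ / r) ^ d * R ^ d = (17 : ℝ) ^ d := by
      rw [← Real.mul_rpow (by positivity) (by positivity)]
      congr 1
      field_simp
      linear_combination (17 * r) * (mul_inv_cancel₀ hρ.ne' : ρ * ρ⁻¹ = 1)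
    have hne : (17 : ℝ) ^ (-d) * (17 : ℝ) ^ d = 1 := by
      rw [← Real.rpow_add (by norm_num), neg_add_cancel, Real.rpow_zero]
    calc (17 : ℝ) ^ (-d) * κ * (ρ / r) ^ d * R ^ d
        = κ * ((17 : ℝ) ^ (-d) * ((ρ / r) ^ d * R ^ d)) := by ring
      _ = κ * ((17 : ℝ) ^ (-d) * (17 : ℝ) ^ d) := by rw [h17]
      _ = κ := by rw [hne, mul_one]
  rw [hE.encard_eq_coe_toFinset_card]
  rw [← ENNReal.mul_le_mul_iff_left (c := ENNReal.ofReal (R ^ d))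
    (by simp [ENNReal.ofReal_eq_zero, not_le, hRd0]) ENNReal.ofReal_ne_top]
  calc ENNReal.ofReal ((17 : ℝ) ^ (-d) * κ * (ρ / r) ^ d) * ENNReal.ofReal (R ^ d)
      = ENNReal.ofReal ((17 : ℝ) ^ (-d) * κ * (ρ / r) ^ d * R ^ d) := by
        rw [← ENNReal.ofReal_mul (by positivity)]
    _ = ENNReal.ofReal κ := by rw [hreal]
    _ ≤ (hE.toFinset.card : ℝ≥0∞) * ENNReal.ofReal (R ^ d) := hκsum

end
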